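/- For all i, j, k ∈ {1, …, l+1}, the function Υ_{ijk}(μ) tends to 0 as μ → 1 with μ ≠ 1, and tends to 0 as μ → −1 with μ ≠ −1. In particular Υ_{ijk} has removable singularities at μ = ±1 and its residues at μ = 1 and μ = −1 vanish. -/

import Mathlib

open Complex Filter Topology

/-- The factor `-κ_m/(μ-κ_m) + κ_m⁻¹/(μ-κ_m⁻¹)` for an index `m ≤ l`, and `1`
for the index `m = l+1`. -/
noncomputable def upsFactor (l : ℕ) (κ : ℕ → ℂ) (m : ℕ) (μ : ℂ) : ℂ :=
  if m ≤ l then -κ m / (μ - κ m) + (κ m)⁻¹ / (μ - (κ m)⁻¹) else 1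

/-- The denominator
`D(μ) = ∑_{r=1}^l (1/(μ-κ_r) + 1/(μ-κ_r⁻¹)) - (l-2)/μ - 4μ/(μ²-1)`. -/
noncomputable def upsD (l : ℕ) (κ : ℕ → ℂ) (μ : ℂ) : ℂ :=
  (∑ r ∈ Finset.Icc 1 l, (1 / (μ - κ r) + 1 / (μ - (κ r)⁻¹)))
    - ((l : ℂ) - 2) / μ - 4 * μ / (μ ^ 2 - 1)

/-- The integrand `Υ_{ijk}(μ) = -N_{ijk}(μ) / (2 μ² D(μ))` computing the residue
contributions to the dual Landau–Ginzburg product of the `D_l` relativistic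
Toda spectral curve. -/
noncomputable def Ups (l : ℕ) (κ : ℕ → ℂ) (i j k : ℕ) (μ : ℂ) : ℂ :=
  -(upsFactor l κ i μ * upsFactor l κ j μ * upsFactor l κ k μ)
    / (2 * μ ^ 2 * upsD l κ μ)

/-!
Let `μ₀ = ±1`. Since `κ_m ≠ ±1`, also `κ_m⁻¹ ≠ ±1`, so the factors of `N_{ijk}` and the part
`A(μ) = ∑ (…) - (l-2)/μ` of `D = A - 4μ/(μ²-1)` are continuous at `μ₀`: only the last term of `D`
blows up. Multiplying through by `μ²-1` gives `Υ = -N (μ²-1) / (2μ² (A (μ²-1) - 4μ))`, a function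
continuous at `μ₀` with value `0`, because the new denominator tends to `-8μ₀³ ≠ 0`.
-/

theorem tendsto_div_sub_div_zero {α 𝕜 : Type*} [NormedField 𝕜] {L : Filter α}
    {f a b q : α → 𝕜} {F A B : 𝕜} (hf : Tendsto f L (𝓝 F)) (ha : Tendsto a L (𝓝 A))
    (hb : Tendsto b L (𝓝 B)) (hB : B ≠ 0) (hq : Tendsto q L (𝓝 0))
    (hq_ne : ∀ᶠ x in L, q x ≠ 0) :
    Tendsto (fun x => f x / (a x - b x / q x)) L (𝓝 0) := by
  have hlim : Tendsto (fun x => f x * q x / (a x * q x - b x)) L (𝓝 (F * 0 / (A * 0 - B))) :=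
    (hf.mul hq).div ((ha.mul hq).sub hb) (by simpa using hB)
  rw [mul_zero, zero_div] at hlim
  refine hlim.congr' ?_
  filter_upwards [hq_ne] with x hx
  rw [sub_div' hx, div_div_eq_mul_div]

theorem inv_ne_of_ne_of_sq_eq_one {K : Type*} [DivisionRing K] {x μ₀ : K} (hμ₀ : μ₀ ^ 2 = 1)
    (hx : x ≠ μ₀) : x⁻¹ ≠ μ₀ := by
  intro h
  apply hx
  rw [← inv_inv x, h, inv_eq_of_mul_eq_one_right (by rw [← sq, hμ₀])]

theorem eventually_sq_sub_one_ne_zero {𝕜 : Type*} [NormedField 𝕜] [CharZero 𝕜] {μ₀ : 𝕜}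
    (hμ₀ : μ₀ ^ 2 = 1) :
    ∀ᶠ μ in 𝓝[≠] μ₀, μ ^ 2 - 1 ≠ 0 := by
  have hneg : μ₀ ≠ -μ₀ := by
    intro h
    have : μ₀ = 0 := by linear_combination h / 2
    simp [this] at hμ₀
  filter_upwards [self_mem_nhdsWithin, eventually_ne_nhdsWithin hneg] with μ h₁ h₂
  rw [← hμ₀, sq_sub_sq]
  exact mul_ne_zero (fun h => h₂ (eq_neg_of_add_eq_zero_left h)) (sub_ne_zero.mpr h₁)

theorem continuousAt_div_sub_add_div_sub_inv {𝕜 : Type*} [NormedField 𝕜] {c μ₀ : 𝕜}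
    (hμ₀ : μ₀ ^ 2 = 1) (hc : c ≠ μ₀) (d e : 𝕜) :
    ContinuousAt (fun μ => d / (μ - c) + e / (μ - c⁻¹)) μ₀ :=
  (continuousAt_const.div (continuousAt_id.sub continuousAt_const)
      (sub_ne_zero.mpr hc.symm)).add
    (continuousAt_const.div (continuousAt_id.sub continuousAt_const)
      (sub_ne_zero.mpr (inv_ne_of_ne_of_sq_eq_one hμ₀ hc).symm))

section

variable {l : ℕ} {κ : ℕ → ℂ} {μ₀ : ℂ}

theorem continuousAt_upsFactor (hμ₀ : μ₀ ^ 2 = 1) (hκ : ∀ r ∈ Finset.Icc 1 l, κ r ≠ μ₀)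
    {m : ℕ} (hm : 1 ≤ m) : ContinuousAt (upsFactor l κ m) μ₀ := by
  unfold upsFactor
  by_cases hml : m ≤ l
  · simpa only [hml, if_true] using
      continuousAt_div_sub_add_div_sub_inv hμ₀ (hκ m (Finset.mem_Icc.mpr ⟨hm, hml⟩)) _ _
  · simpa only [hml, if_false] using continuousAt_const

theorem continuousAt_upsD_regularPart (hμ₀ : μ₀ ^ 2 = 1)
    (hκ : ∀ r ∈ Finset.Icc 1 l, κ r ≠ μ₀) :
    ContinuousAt (fun μ => (∑ r ∈ Finset.Icc 1 l, (1 / (μ - κ r) + 1 / (μ - (κ r)⁻¹)))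
      - ((l : ℂ) - 2) / μ) μ₀ := by
  have hμ₀_ne : μ₀ ≠ 0 := by rintro rfl; norm_num at hμ₀
  refine ContinuousAt.sub ?_ (continuousAt_const.div continuousAt_id hμ₀_ne)
  exact tendsto_finsetSum _ fun r hr => continuousAt_div_sub_add_div_sub_inv hμ₀ (hκ r hr) 1 1

theorem tendsto_Ups_nhdsNE (hμ₀ : μ₀ ^ 2 = 1) (hκ : ∀ r ∈ Finset.Icc 1 l, κ r ≠ μ₀)
    {i j k : ℕ} (hi : 1 ≤ i) (hj : 1 ≤ j) (hk : 1 ≤ k) :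
    Tendsto (Ups l κ i j k) (𝓝[≠] μ₀) (𝓝 0) := by
  have hUps : Ups l κ i j k = fun μ =>
      -(upsFactor l κ i μ * upsFactor l κ j μ * upsFactor l κ k μ) / (2 * μ ^ 2) / upsD l κ μ := by
    funext μ
    rw [Ups, div_mul_eq_div_div]
  have hN : ContinuousAt (fun μ =>
      -(upsFactor l κ i μ * upsFactor l κ j μ * upsFactor l κ k μ) / (2 * μ ^ 2)) μ₀ :=
    (((continuousAt_upsFactor hμ₀ hκ hi).mul (continuousAt_upsFactor hμ₀ hκ hj)).mul
      (continuousAt_upsFactor hμ₀ hκ hk)).neg.div (by fun_prop) (by simp [hμ₀])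
  have hq : Tendsto (fun μ : ℂ => μ ^ 2 - 1) (𝓝 μ₀) (𝓝 (μ₀ ^ 2 - 1)) :=
    ((continuous_pow 2).sub continuous_const).tendsto μ₀
  rw [hμ₀, sub_self] at hq
  rw [hUps]
  exact tendsto_div_sub_div_zero (hN.tendsto.mono_left nhdsWithin_le_nhds)
    ((continuousAt_upsD_regularPart hμ₀ hκ).tendsto.mono_left nhdsWithin_le_nhds)
    ((continuous_const_mul 4).tendsto μ₀ |>.mono_left nhdsWithin_le_nhds)
    (mul_ne_zero (by norm_num) (by rintro rfl; norm_num at hμ₀))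
    (hq.mono_left nhdsWithin_le_nhds) (eventually_sq_sub_one_ne_zero hμ₀)

end

theorem stmt2 (l : ℕ) (κ : ℕ → ℂ)
    (hκ : ∀ r ∈ Finset.Icc 1 l, κ r ≠ 0 ∧ κ r ≠ 1 ∧ κ r ≠ -1)
    (i j k : ℕ) (hi : i ∈ Finset.Icc 1 (l + 1)) (hj : j ∈ Finset.Icc 1 (l + 1))
    (hk : k ∈ Finset.Icc 1 (l + 1)) :
    Tendsto (Ups l κ i j k) (𝓝[≠] 1) (𝓝 0) ∧
      Tendsto (Ups l κ i j k) (𝓝[≠] (-1)) (𝓝 0) := by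
  have hi₁ := (Finset.mem_Icc.mp hi).1
  have hj₁ := (Finset.mem_Icc.mp hj).1
  have hk₁ := (Finset.mem_Icc.mp hk).1
  exact ⟨tendsto_Ups_nhdsNE (by norm_num) (fun r hr => (hκ r hr).2.1) hi₁ hj₁ hk₁,
    tendsto_Ups_nhdsNE (by norm_num) (fun r hr => (hκ r hr).2.2) hi₁ hj₁ hk₁⟩
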